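/- arXiv:1902.00942 — 2 statements merged into one kernel-verified Lean document; each statement's English description precedes it below -/
import Mathlib

section
/- Let φ : X → ℝ be a 1-Lipschitz function on a metric space (X, d), and let T₀ ∈ ℝ. Suppose Cpl ⊆ X × X is a set of pairs such that for every (z₁, z₂) ∈ Cpl one has φ(z₂) = φ(z₁) − T₀ and d(z₁, z₂) = T₀ (i.e. each pair lies on a transport ray of φ of length T₀). Then Cpl is d²-cyclically monotone: for every finite collection (x₁,y₁), …, (x_k, y_k) ∈ Cpl and every permutation σ of {1,…,k}, one has Σᵢ d(xᵢ, yᵢ)² ≤ Σᵢ d(xᵢ, y_{σ(i)})². -/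
open Set

/-- A coupling supported on transport rays (of fixed length `T₀`) of a `1`-Lipschitz
Kantorovich potential `φ` is `d²`-cyclically monotone. -/
theorem transport_rays_cyclically_monotone {X : Type*} [MetricSpace X]
    (φ : X → ℝ) (hφ : LipschitzWith 1 φ) (T₀ : ℝ) (Cpl : Set (X × X))
    (hCpl : ∀ p ∈ Cpl, φ p.2 = φ p.1 - T₀ ∧ dist p.1 p.2 = T₀) :
    ∀ (k : ℕ) (x y : Fin k → X), (∀ i, (x i, y i) ∈ Cpl) →
      ∀ σ : Equiv.Perm (Fin k),
        ∑ i, dist (x i) (y i) ^ 2 ≤ ∑ i, dist (x i) (y (σ i)) ^ 2 := by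
  intro k x y hxy σ
  set a : Fin k → ℝ := fun i => φ (x i) with ha
  -- each original pair contributes T₀²
  have hd : ∀ i, dist (x i) (y i) = T₀ := fun i => (hCpl _ (hxy i)).2
  have hφy : ∀ i, φ (y i) = a i - T₀ := fun i => (hCpl _ (hxy i)).1
  -- pointwise lower bound on the permuted costs
  have key : ∀ i, (a i - a (σ i) + T₀) ^ 2 ≤ dist (x i) (y (σ i)) ^ 2 := by
    intro i
    have h1 : |φ (x i) - φ (y (σ i))| ≤ dist (x i) (y (σ i)) := by
      have := hφ.dist_le_mul (x i) (y (σ i))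
      rwa [NNReal.coe_one, one_mul, Real.dist_eq] at this
    have h2 : (φ (x i) - φ (y (σ i))) ^ 2 ≤ dist (x i) (y (σ i)) ^ 2 := by
      calc (φ (x i) - φ (y (σ i))) ^ 2 = |φ (x i) - φ (y (σ i))| ^ 2 := (sq_abs _).symm
        _ ≤ dist (x i) (y (σ i)) ^ 2 := by
            exact pow_le_pow_left₀ (abs_nonneg _) h1 2
    have : φ (x i) - φ (y (σ i)) = a i - a (σ i) + T₀ := by
      rw [hφy (σ i)]; ring
    rwa [this] at h2
  have hsum0 : ∑ i, (a i - a (σ i)) = 0 := by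
    rw [Finset.sum_sub_distrib]
    have := Equiv.sum_comp σ a
    simp [this]
  calc ∑ i, dist (x i) (y i) ^ 2 = ∑ i : Fin k, T₀ ^ 2 := by
        apply Finset.sum_congr rfl; intro i _; rw [hd i]
    _ ≤ ∑ i, (a i - a (σ i) + T₀) ^ 2 := by
        have expand : ∑ i, (a i - a (σ i) + T₀) ^ 2
            = ∑ i, ((a i - a (σ i)) ^ 2 + 2 * T₀ * (a i - a (σ i)) + T₀ ^ 2) := by
          apply Finset.sum_congr rfl; intro i _; ring
        rw [expand, Finset.sum_add_distrib, Finset.sum_add_distrib,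
          ← Finset.mul_sum, hsum0, mul_zero, add_zero]
        have : (0:ℝ) ≤ ∑ i, (a i - a (σ i)) ^ 2 :=
          Finset.sum_nonneg fun i _ => sq_nonneg _
        linarith
    _ ≤ ∑ i, dist (x i) (y (σ i)) ^ 2 :=
        Finset.sum_le_sum fun i _ => key i
end

section
/- Let (X,d,𝔪) be a metric measure space with 𝔪 locally finite, and let μ₀, μ₁ be compactly supported probability measures. Suppose (μ_t)_{t∈[0,1]} is a W₂-geodesic connecting μ₀ and μ₁ such that μ_t ≤ C·𝔪 for all t ∈ [0,1] and some constant C > 0. If ν is a Borel measure with μ_t ≪ ν for all t > 0 but μ₀(N) > 0 for some compact set N with ν(N) = 0, then one derives a contradiction: in fact 𝔪(N) ≥ 1/C + 𝔪(N), which is impossible. Hence μ₀ ≪ ν. -/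
noncomputable section
open MeasureTheory Metric Set ENNReal NNReal

/-- `π` is a coupling of `μ` and `ν`. -/
def IsCoupling {X : Type*} [MeasurableSpace X] (μ ν : Measure X)
    (π : Measure (X × X)) : Prop :=
  π.map Prod.fst = μ ∧ π.map Prod.snd = ν

/-- The `L²`-Wasserstein distance (as a real number). -/
def W2 {X : Type*} [MetricSpace X] [MeasurableSpace X] (μ ν : Measure X) : ℝ :=
  Real.sqrt (sInf {c : ℝ | ∃ π : Measure (X × X),
    IsCoupling μ ν π ∧ c = ∫ p, dist p.1 p.2 ^ 2 ∂π})

/-- `(μ t)_{t ∈ [0,1]}` is a constant-speed geodesic in the `L²`-Wasserstein space. -/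
def IsW2Geodesic {X : Type*} [MetricSpace X] [MeasurableSpace X]
    (μ : ℝ → Measure X) : Prop :=
  ∀ s ∈ Set.Icc (0 : ℝ) 1, ∀ t ∈ Set.Icc (0 : ℝ) 1,
    W2 (μ s) (μ t) = |t - s| * W2 (μ 0) (μ 1)

/-- Relative entropy `Ent(μ | m) = ∫ ρ log ρ dm` for `ρ = dμ/dm`. -/
def Ent {X : Type*} [MeasurableSpace X] (μ m : Measure X) : ℝ :=
  ∫ x, (μ.rnDeriv m x).toReal * Real.log (μ.rnDeriv m x).toReal ∂m

/-- The Lott–Sturm–Villani condition `CD(K, ∞)`: `K`-displacement convexity of the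
entropy `Ent(· | m)` on the `L²`-Wasserstein space. -/
def CDinfty {X : Type*} [MetricSpace X] [MeasurableSpace X]
    (m : Measure X) (K : ℝ) : Prop :=
  ∀ μ₀ μ₁ : Measure X, IsProbabilityMeasure μ₀ → IsProbabilityMeasure μ₁ →
    μ₀ ≪ m → μ₁ ≪ m →
    ∃ μ : ℝ → Measure X, IsW2Geodesic μ ∧ μ 0 = μ₀ ∧ μ 1 = μ₁ ∧
      ∀ t ∈ Set.Icc (0 : ℝ) 1,
        Ent (μ t) m ≤ (1 - t) * Ent μ₀ m + t * Ent μ₁ m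
          - K / 2 * (t * (1 - t)) * W2 μ₀ μ₁ ^ 2


/-- Lemma on absolute continuity of the initial point of a Wasserstein geodesic:
if the intermediate measures `μ t` of a `W₂`-geodesic between compactly supported
probability measures have uniformly bounded densities with respect to a locally
finite measure `𝔪`, the supports converge to the support of `μ 0`, and `μ t ≪ ν`
for all `t ∈ (0,1]`, then `μ 0 ≪ ν` (in the paper this is derived by the
contradiction `𝔪(N) ≥ 1/C + 𝔪(N)` for a `ν`-null compact set `N` with
`μ₀(N) > 0`). -/
theorem geodesic_initial_measure_absolutely_continuous
    {X : Type*} [MetricSpace X] [MeasurableSpace X] [BorelSpace X]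
    (m : Measure X) [IsLocallyFiniteMeasure m]
    (μ : ℝ → Measure X) (hgeo : IsW2Geodesic μ)
    (hprob : ∀ t ∈ Set.Icc (0 : ℝ) 1, IsProbabilityMeasure (μ t))
    (K₀ K₁ : Set X) (hK₀ : IsCompact K₀) (hK₁ : IsCompact K₁)
    (hsupp0 : μ 0 K₀ᶜ = 0) (hsupp1 : μ 1 K₁ᶜ = 0)
    (C : ℝ≥0∞) (hC : 0 < C) (hC' : C ≠ ⊤)
    (hdens : ∀ t ∈ Set.Icc (0 : ℝ) 1, μ t ≤ C • m)
    (hconv : ∀ ε > (0 : ℝ), ∃ δ > (0 : ℝ), ∀ t ∈ Set.Ioo (0 : ℝ) δ,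
      μ t (Metric.thickening ε K₀)ᶜ = 0)
    (ν : Measure X) (hν : ∀ t ∈ Set.Ioc (0 : ℝ) 1, μ t ≪ ν) :
    μ 0 ≪ ν := by
  have h01 : (0 : ℝ) ∈ Set.Icc (0 : ℝ) 1 := ⟨le_refl 0, zero_le_one⟩
  haveI hp0 : IsProbabilityMeasure (μ 0) := hprob 0 h01
  -- Main step: `μ 0` vanishes on every compact `ν`-null set.
  have hK₀ne : K₀.Nonempty := by
    by_contra h
    rw [Set.not_nonempty_iff_eq_empty] at h
    rw [h, Set.compl_empty, measure_univ] at hsupp0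
    exact one_ne_zero hsupp0
  obtain ⟨cset, hcc, hccl⟩ := hK₀.isSeparable
  have hcne : cset.Nonempty := by
    rcases cset.eq_empty_or_nonempty with h | h
    · exfalso
      rw [h, closure_empty] at hccl
      exact hK₀ne.ne_empty (Set.subset_empty_iff.mp hccl)
    · exact h
  obtain ⟨u, hu⟩ := hcc.exists_eq_range hcne
  have hcl : ∀ x ∈ K₀, x ∈ closure (Set.range u) := fun x hx => by
    rw [← hu]; exact hccl hx
  -- a measurable function agreeing with `dist` on `K₀ × X`
  set g : X × X → ℝ := fun p => ⨅ n, (dist p.1 (u n) + dist (u n) p.2) with hgdef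
  have hgmeas : Measurable g := by
    refine Measurable.iInf fun n => ?_
    exact ((continuous_id.dist continuous_const).measurable.comp measurable_fst).add
      ((continuous_const.dist continuous_id).measurable.comp measurable_snd)
  have hgeq : ∀ x ∈ K₀, ∀ y : X, g (x, y) = dist x y := by
    intro x hx y
    have hbdd : BddBelow (Set.range fun n => dist x (u n) + dist (u n) y) := by
      refine ⟨0, ?_⟩
      rintro r ⟨n, rfl⟩
      positivity
    refine le_antisymm ?_ (le_ciInf fun n => dist_triangle x (u n) y)
    refine _root_.le_of_forall_pos_le_add fun η hη => ?_
    obtain ⟨z, ⟨n, rfl⟩, hz⟩ := Metric.mem_closure_iff.mp (hcl x hx) (η / 2) (by linarith)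
    refine (ciInf_le hbdd n).trans ?_
    have h2 : dist (u n) x = dist x (u n) := dist_comm _ _
    have h3 := dist_triangle (u n) x y
    linarith
  have compact_case : ∀ N : Set X, IsCompact N → N ⊆ K₀ → ν N = 0 → μ 0 N = 0 := by
    intro N hN hNK₀ hνN
    -- a finite-measure open neighborhood of `N` and convergence of thickening measures
    obtain ⟨U, hNU, hUopen, hUfin⟩ := hN.exists_open_superset_measure_lt_top m
    obtain ⟨r₀, hr₀, hr₀sub⟩ := hN.exists_thickening_subset_open hUopen hNU
    have hthick : Filter.Tendsto (fun r => m (thickening r N)) (nhdsWithin 0 (Set.Ioi 0))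
        (nhds (m N)) :=
      tendsto_measure_thickening_of_isClosed
        ⟨r₀, hr₀, ((measure_mono hr₀sub).trans_lt hUfin).ne⟩ hN.isClosed
    have hmN : m N ≠ ∞ := ((measure_mono hNU).trans_lt hUfin).ne
    obtain ⟨δ₁, hδ₁, hδ₁supp⟩ := hconv 1 one_pos
    refine le_antisymm ?_ zero_le
    refine ENNReal.le_of_forall_pos_le_add fun a ha _ => ?_
    rw [zero_add]
    have haR : (0 : ℝ) < (a : ℝ) := ha
    set b : ℝ≥0∞ := ((a : ℝ≥0∞) / 2) / C with hbdef
    have hb0 : b ≠ 0 := by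
      refine (ENNReal.div_pos ?_ hC').ne'
      exact (ENNReal.div_pos (by exact_mod_cast ha.ne') ENNReal.ofNat_ne_top).ne'
    obtain ⟨ε, hεthick, hεpos'⟩ :=
      ((hthick.eventually_lt_const (ENNReal.lt_add_right hmN hb0)).and
        eventually_mem_nhdsWithin).exists
    have hεpos : (0 : ℝ) < ε := hεpos'
    have hdiff : m (thickening ε N \ N) ≤ b := by
      rw [measure_diff (self_subset_thickening hεpos N)
        hN.isClosed.measurableSet.nullMeasurableSet hmN]
      exact tsub_le_iff_right.mpr (le_of_lt (by rwa [add_comm] at hεthick))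
    -- choice of a small time `t`
    set W : ℝ := W2 (μ 0) (μ 1) with hWdef
    have hW0 : 0 ≤ W := Real.sqrt_nonneg _
    set s₀ : ℝ := Real.sqrt (ε ^ 2 * (a : ℝ) / 4) with hs0
    have hs₀pos : 0 < s₀ := Real.sqrt_pos.mpr (by positivity)
    set t : ℝ := min 1 (min (δ₁ / 2) (s₀ / (W + 1))) with htdef
    have ht0 : 0 < t := lt_min one_pos (lt_min (by linarith) (by positivity))
    have ht1 : t ≤ 1 := min_le_left _ _
    have htδ : t < δ₁ :=
      lt_of_le_of_lt ((min_le_right _ _).trans (min_le_left _ _)) (by linarith)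
    have htW : (t * W) ^ 2 ≤ ε ^ 2 * (a : ℝ) / 4 := by
      have h1 : t ≤ s₀ / (W + 1) := (min_le_right _ _).trans (min_le_right _ _)
      have h2 : t * W ≤ s₀ := by
        calc t * W ≤ (s₀ / (W + 1)) * W := mul_le_mul_of_nonneg_right h1 hW0
          _ ≤ s₀ := by
              rw [div_mul_eq_mul_div, div_le_iff₀ (by linarith)]
              nlinarith
      calc (t * W) ^ 2 ≤ s₀ ^ 2 := by nlinarith [mul_nonneg ht0.le hW0]
        _ = ε ^ 2 * (a : ℝ) / 4 := Real.sq_sqrt (by positivity)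
    haveI hpt : IsProbabilityMeasure (μ t) := hprob t ⟨ht0.le, ht1⟩
    -- the geodesic equation gives a near-optimal coupling of `μ 0` and `μ t`
    have hgeot := hgeo 0 h01 t ⟨ht0.le, ht1⟩
    rw [sub_zero, abs_of_nonneg ht0.le, ← hWdef] at hgeot
    simp only [W2] at hgeot
    set S : Set ℝ := {c : ℝ | ∃ π : Measure (X × X),
      IsCoupling (μ 0) (μ t) π ∧ c = ∫ p, dist p.1 p.2 ^ 2 ∂π} with hSdef
    have hSne : S.Nonempty := by
      refine ⟨_, (μ 0).prod (μ t), ⟨?_, ?_⟩, rfl⟩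
      · rw [Measure.map_fst_prod]; simp
      · rw [Measure.map_snd_prod]; simp
    have hsInf_le : sInf S ≤ (t * W) ^ 2 := by
      rcases le_or_gt (sInf S) 0 with h0 | h0
      · exact h0.trans (sq_nonneg _)
      · have h2 := Real.sq_sqrt h0.le
        rw [hgeot] at h2
        exact h2.ge
    have hεa : (0 : ℝ) < ε ^ 2 * ((a : ℝ) / 2) := by positivity
    obtain ⟨c, hcS, hclt⟩ := exists_lt_of_csInf_lt hSne
      (lt_of_le_of_lt hsInf_le (by nlinarith : (t * W) ^ 2 < ε ^ 2 * ((a : ℝ) / 2)))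
    obtain ⟨π, hπ, hceq⟩ := hcS
    -- the coupling is a probability measure concentrated near `K₀`
    haveI hπprob : IsProbabilityMeasure π := by
      constructor
      have h1 : π Set.univ = (π.map Prod.fst) Set.univ := by
        rw [Measure.map_apply measurable_fst MeasurableSet.univ, Set.preimage_univ]
      rw [h1, hπ.1, measure_univ]
    have hT : μ t (thickening 1 K₀)ᶜ = 0 := hδ₁supp t ⟨ht0, htδ⟩
    have hae1 : ∀ᵐ p ∂π, p.1 ∈ K₀ := by
      rw [ae_iff, show {p : X × X | ¬ p.1 ∈ K₀} = Prod.fst ⁻¹' K₀ᶜ from rfl,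
        ← Measure.map_apply measurable_fst hK₀.isClosed.measurableSet.compl, hπ.1]
      exact hsupp0
    have hae2 : ∀ᵐ p ∂π, p.2 ∈ thickening 1 K₀ := by
      rw [ae_iff, show {p : X × X | ¬ p.2 ∈ thickening 1 K₀}
            = Prod.snd ⁻¹' (thickening 1 K₀)ᶜ from rfl,
        ← Measure.map_apply measurable_snd isOpen_thickening.measurableSet.compl, hπ.2]
      exact hT
    have hbddset : Bornology.IsBounded (thickening 1 K₀) := hK₀.isBounded.thickening
    have hfg : ∀ᵐ p ∂π, dist p.1 p.2 ^ 2 = g p ^ 2 := by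
      filter_upwards [hae1] with p hp
      have h := hgeq p.1 hp p.2
      rw [Prod.mk.eta] at h
      rw [h]
    have hgsq : Measurable fun p : X × X => g p ^ 2 := hgmeas.pow_const 2
    have hgnn : ∀ᵐ p ∂π, 0 ≤ g p ^ 2 := Filter.Eventually.of_forall fun p => sq_nonneg _
    have hint : Integrable (fun p : X × X => g p ^ 2) π := by
      refine Integrable.mono' (integrable_const ((Metric.diam (thickening 1 K₀)) ^ 2))
        hgsq.aestronglyMeasurable ?_
      filter_upwards [hae1, hae2, hfg] with p hp1 hp2 hfgp
      have h1 : p.1 ∈ thickening 1 K₀ := self_subset_thickening one_pos K₀ hp1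
      have hd : dist p.1 p.2 ≤ Metric.diam (thickening 1 K₀) :=
        Metric.dist_le_diam_of_mem hbddset h1 hp2
      have h2 : g p ^ 2 ≤ Metric.diam (thickening 1 K₀) ^ 2 := by
        rw [← hfgp]
        nlinarith [dist_nonneg (x := p.1) (y := p.2)]
      simpa [Real.norm_eq_abs, abs_of_nonneg (sq_nonneg (g p))] using h2
    have hceq' : c = ∫ p, g p ^ 2 ∂π := hceq.trans (integral_congr_ae hfg)
    have hlint : ∫⁻ p, ENNReal.ofReal (g p ^ 2) ∂π = ENNReal.ofReal c := by
      rw [hceq']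
      exact (ofReal_integral_eq_lintegral_ofReal hint hgnn).symm
    -- Markov inequality : the coupling gives little mass to `N × (thickening ε N)ᶜ`
    have hmarkov : π (N ×ˢ (thickening ε N)ᶜ) ≤ ENNReal.ofReal ((a : ℝ) / 2) := by
      have hsub : N ×ˢ (thickening ε N)ᶜ ⊆
          {p : X × X | ENNReal.ofReal (ε ^ 2) ≤ ENNReal.ofReal (g p ^ 2)} := by
        rintro ⟨x, y⟩ ⟨hx, hy⟩
        have hdist : ε ≤ dist x y := by
          by_contra hlt
          push_neg at hlt
          exact hy (mem_thickening_iff.mpr ⟨x, hx, by rwa [dist_comm]⟩)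
        have hgxy : g (x, y) = dist x y := hgeq x (hNK₀ hx) y
        refine ENNReal.ofReal_le_ofReal ?_
        show ε ^ 2 ≤ g (x, y) ^ 2
        rw [hgxy]
        nlinarith
      have h1 := mul_meas_ge_le_lintegral₀ (μ := π)
        hgsq.ennreal_ofReal.aemeasurable (ENNReal.ofReal (ε ^ 2))
      rw [hlint] at h1
      have h3 : ENNReal.ofReal (ε ^ 2) * π (N ×ˢ (thickening ε N)ᶜ)
          ≤ ENNReal.ofReal (ε ^ 2) * ENNReal.ofReal ((a : ℝ) / 2) := by
        calc ENNReal.ofReal (ε ^ 2) * π (N ×ˢ (thickening ε N)ᶜ)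
            ≤ ENNReal.ofReal (ε ^ 2) *
              π {p : X × X | ENNReal.ofReal (ε ^ 2) ≤ ENNReal.ofReal (g p ^ 2)} :=
              mul_le_mul_right (measure_mono hsub) _
          _ ≤ ENNReal.ofReal c := h1
          _ ≤ ENNReal.ofReal (ε ^ 2 * ((a : ℝ) / 2)) := ENNReal.ofReal_le_ofReal hclt.le
          _ = ENNReal.ofReal (ε ^ 2) * ENNReal.ofReal ((a : ℝ) / 2) :=
              ENNReal.ofReal_mul (by positivity)
      exact (ENNReal.mul_le_mul_iff_right (ENNReal.ofReal_pos.mpr (by positivity)).ne'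
        ENNReal.ofReal_ne_top).mp h3
    -- decomposition of the mass of `N`
    have h3 : π (Prod.snd ⁻¹' thickening ε N) = μ t (thickening ε N) := by
      rw [← Measure.map_apply measurable_snd isOpen_thickening.measurableSet, hπ.2]
    have hdecomp : μ 0 N ≤ μ t (thickening ε N) + π (N ×ˢ (thickening ε N)ᶜ) := by
      have h1 : μ 0 N = π (Prod.fst ⁻¹' N) := by
        rw [← hπ.1, Measure.map_apply measurable_fst hN.isClosed.measurableSet]
      have h2 : Prod.fst ⁻¹' N ⊆ (Prod.snd ⁻¹' thickening ε N) ∪ (N ×ˢ (thickening ε N)ᶜ) := by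
        rintro ⟨x, y⟩ hx
        by_cases hy : y ∈ thickening ε N
        · exact Or.inl hy
        · exact Or.inr ⟨hx, hy⟩
      rw [h1, ← h3]
      exact (measure_mono h2).trans (measure_union_le _ _)
    -- the intermediate measure gives little mass to `thickening ε N`
    have hμtN : μ t N = 0 := hν t ⟨ht0, ht1⟩ hνN
    have h4 : μ t (thickening ε N) ≤ C * m (thickening ε N \ N) := by
      calc μ t (thickening ε N) ≤ μ t ((thickening ε N \ N) ∪ N) :=
            measure_mono (fun x hx => by
              by_cases h : x ∈ N
              · exact Or.inr h
              · exact Or.inl ⟨hx, h⟩)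
        _ ≤ μ t (thickening ε N \ N) + μ t N := measure_union_le _ _
        _ = μ t (thickening ε N \ N) := by rw [hμtN, add_zero]
        _ ≤ (C • m) (thickening ε N \ N) := Measure.le_iff'.mp (hdens t ⟨ht0.le, ht1⟩) _
        _ = C * m (thickening ε N \ N) := by simp [Measure.smul_apply, smul_eq_mul]
    have hofReal : ENNReal.ofReal ((a : ℝ) / 2) = (a : ℝ≥0∞) / 2 := by
      rw [ENNReal.ofReal_div_of_pos two_pos, ENNReal.ofReal_coe_nnreal]
      norm_num
    calc μ 0 N ≤ μ t (thickening ε N) + π (N ×ˢ (thickening ε N)ᶜ) := hdecomp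
      _ ≤ C * m (thickening ε N \ N) + ENNReal.ofReal ((a : ℝ) / 2) := add_le_add h4 hmarkov
      _ ≤ C * b + (a : ℝ≥0∞) / 2 := add_le_add (mul_le_mul_right hdiff C) hofReal.le
      _ = (a : ℝ≥0∞) / 2 + (a : ℝ≥0∞) / 2 := by
          rw [hbdef, ENNReal.mul_div_cancel hC.ne' hC']
      _ = (a : ℝ≥0∞) := ENNReal.add_halves _
  -- Conclusion via inner regularity with closed sets
  refine Measure.AbsolutelyContinuous.mk fun s hs hνs => ?_
  by_contra hpos
  obtain ⟨F, hFs, hFclosed, hF⟩ :=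
    hs.exists_isClosed_lt_add (μ := μ 0) (measure_ne_top _ _) (ε := μ 0 s) hpos
  have hFK : μ 0 F = 0 := by
    have hcap : IsCompact (F ∩ K₀) := hK₀.inter_left hFclosed
    have h0 : μ 0 (F ∩ K₀) = 0 :=
      compact_case _ hcap Set.inter_subset_right
        (measure_mono_null (fun x hx => hFs hx.1) hνs)
    have h1 : μ 0 F ≤ μ 0 (F ∩ K₀) + μ 0 K₀ᶜ := by
      refine (measure_mono (fun x hx => ?_)).trans (measure_union_le _ _)
      by_cases h : x ∈ K₀
      · exact Or.inl ⟨hx, h⟩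
      · exact Or.inr h
    rw [h0, hsupp0, add_zero] at h1
    exact nonpos_iff_eq_zero.mp h1
  rw [hFK, zero_add] at hF
  exact absurd hF (lt_irrefl _)
end
end
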